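/- arXiv:1410.3197 — 3 statements merged into one kernel-verified Lean document; each statement's English description precedes it below -/
import Mathlib

section
/- Let A ∈ ℂ^{n×n} be non-Hermitian positive definite (i.e., H = (A+A*)/2 is Hermitian positive definite), and suppose A = M_k - N_k, k=1,…,m, are splittings with M_k nonsingular such that each M_k*(A^{-1})*A + N_k is positive definite (Hermitian part positive definite), and E_k = β_k I with β_k ≥ 0, Σ_k β_k = 1. Then the iteration matrix T = Σ_{k=1}^m β_k M_k^{-1}N_k satisfies ρ(T) < 1. -/
/-!
Write `H` for the Hermitian part of `A` and `T_k = M_k⁻¹ N_k = 1 - Y_k` with `Y_k = M_k⁻¹ A`.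
A direct computation gives `H - T_kᴴ H T_k = Y_kᴴ G_k Y_k`, where `G_k` is the Hermitian part of
`M_kᴴ A⁻ᴴ A + N_k`; as `Y_k` is invertible this is positive definite, i.e. every `T_k` is a strict
contraction for the norm `‖x‖_H = √(xᴴ H x)`. A convex combination of strict contractions is again
one, so every eigenvalue `μ` of `T = ∑ β_k T_k` satisfies `|μ| ‖v‖_H = ‖T v‖_H < ‖v‖_H`.
-/

open Matrix
open scoped ComplexOrder ENNReal NNReal

theorem Seminorm.sum_smul_lt_of_lt {𝕜 E ι : Type*} [RCLike 𝕜] [AddCommGroup E] [Module 𝕜 E]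
    [Fintype ι] (p : Seminorm 𝕜 E) {β : ι → ℝ} (hβ : ∀ k, 0 ≤ β k) (hsum : ∑ k, β k = 1)
    {w : ι → E} {v : E} (hw : ∀ k, p (w k) < p v) :
    p (∑ k, (β k : 𝕜) • w k) < p v := by
  obtain ⟨k₀, hk₀⟩ : ∃ k, 0 < β k := by
    by_contra! h
    have : ∑ k, β k ≤ 0 := Finset.sum_nonpos fun k _ => h k
    linarith
  calc p (∑ k, (β k : 𝕜) • w k) ≤ ∑ k, β k * p (w k) := by
        refine (Finset.le_sum_of_subadditive p (map_zero p).le (map_add_le_add p) _ _).trans_eq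
          (Finset.sum_congr rfl fun k _ => ?_)
        rw [map_smul_eq_mul, RCLike.norm_ofReal, abs_of_nonneg (hβ k)]
    _ < ∑ k, β k * p v :=
        Finset.sum_lt_sum (fun k _ => mul_le_mul_of_nonneg_left (hw k).le (hβ k))
          ⟨k₀, Finset.mem_univ _, mul_lt_mul_of_pos_left (hw k₀) hk₀⟩
    _ = p v := by rw [← Finset.sum_mul, hsum, one_mul]

theorem spectralRadius_lt_of_forall_lt_of_finite {𝕜 A : Type*} [NormedField 𝕜] [Ring A]
    [Algebra 𝕜 A] {a : A} (hfin : (spectrum 𝕜 a).Finite) {r : ℝ≥0} (hr : 0 < r)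
    (h : ∀ k ∈ spectrum 𝕜 a, ‖k‖₊ < r) : spectralRadius 𝕜 a < r := by
  rcases (spectrum 𝕜 a).eq_empty_or_nonempty with hempty | hne
  · simpa [spectralRadius, hempty] using hr
  obtain ⟨k₀, hk₀, hmax⟩ := Set.exists_max_image _ (fun k => (‖k‖₊ : ℝ≥0∞)) hfin hne
  exact (iSup₂_le hmax).trans_lt (mod_cast h k₀ hk₀)

namespace Matrix

variable {n 𝕜 : Type*} [RCLike 𝕜]

def hermitianPart (A : Matrix n n 𝕜) : Matrix n n 𝕜 := (1 / 2 : 𝕜) • (A + Aᴴ)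

theorem hermitianPart_sub (A B : Matrix n n 𝕜) :
    hermitianPart (A - B) = hermitianPart A - hermitianPart B := by
  simp only [hermitianPart, conjTranspose_sub, ← smul_sub]
  abel_nf

variable [Fintype n]

theorem star_dotProduct_hermitianPart_mulVec (A : Matrix n n 𝕜) (x : n → 𝕜) :
    star x ⬝ᵥ hermitianPart A *ᵥ x =
      (1 / 2 : 𝕜) * (star x ⬝ᵥ A *ᵥ x + star (A *ᵥ x) ⬝ᵥ x) := by
  rw [hermitianPart, smul_mulVec, dotProduct_smul, add_mulVec, dotProduct_add,
    dotProduct_mulVec _ Aᴴ, ← star_mulVec, smul_eq_mul]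

theorem conjTranspose_mul_hermitianPart_mul (P Y : Matrix n n 𝕜) :
    Yᴴ * hermitianPart P * Y = hermitianPart (Yᴴ * P * Y) := by
  simp only [hermitianPart, Matrix.mul_smul, Matrix.smul_mul, Matrix.mul_add, Matrix.add_mul,
    conjTranspose_mul, conjTranspose_conjTranspose, Matrix.mul_assoc]

theorem re_star_dotProduct_mulVec_lt {H T : Matrix n n 𝕜} (hT : (H - Tᴴ * H * T).PosDef)
    {x : n → 𝕜} (hx : x ≠ 0) :
    RCLike.re (star (T *ᵥ x) ⬝ᵥ H *ᵥ (T *ᵥ x)) < RCLike.re (star x ⬝ᵥ H *ᵥ x) := by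
  have h := hT.re_dotProduct_pos hx
  rw [sub_mulVec, dotProduct_sub, map_sub, sub_pos] at h
  simpa only [star_mulVec, dotProduct_mulVec, vecMul_vecMul] using h

/-- The seminorm `√(re xᴴ H x)` of the inner product `⟪x, y⟫ = xᴴ H y` induced by `H`. -/
noncomputable def PosSemidef.seminorm {H : Matrix n n 𝕜} (hH : H.PosSemidef) :
    Seminorm 𝕜 (n → 𝕜) :=
  @normSeminorm 𝕜 (n → 𝕜) _ (H.toSeminormedAddCommGroup hH)
    (H.toInnerProductSpace hH).toNormedSpace

theorem PosSemidef.seminorm_sq {H : Matrix n n 𝕜} (hH : H.PosSemidef) (x : n → 𝕜) :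
    hH.seminorm x ^ 2 = RCLike.re (star x ⬝ᵥ H *ᵥ x) := by
  rw [dotProduct_comm]
  exact @norm_sq_eq_re_inner 𝕜 _ _ (H.toSeminormedAddCommGroup hH) (H.toInnerProductSpace hH) x

variable [DecidableEq n]

theorem isUnit_of_posDef_hermitianPart {A : Matrix n n 𝕜} (hA : (hermitianPart A).PosDef) :
    IsUnit A := by
  rw [isUnit_iff_isUnit_det, isUnit_iff_ne_zero, Ne, ← exists_mulVec_eq_zero_iff]
  rintro ⟨x, hx0, hx⟩
  have hpos := hA.re_dotProduct_pos hx0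
  rw [star_dotProduct_hermitianPart_mulVec, hx] at hpos
  simp at hpos

theorem hermitianPart_sub_conjTranspose_mul_mul {A M Y : Matrix n n 𝕜} (hA : IsUnit A)
    (hMY : M * Y = A) :
    hermitianPart A - (1 - Y)ᴴ * hermitianPart A * (1 - Y) =
      Yᴴ * hermitianPart (Mᴴ * (A⁻¹)ᴴ * A + (M - A)) * Y := by
  have hAinv : Aᴴ * (A⁻¹)ᴴ = 1 := by
    rw [← conjTranspose_mul, nonsing_inv_mul _ ((isUnit_iff_isUnit_det A).mp hA),
      conjTranspose_one]
  have hconj : Yᴴ * (Mᴴ * (A⁻¹)ᴴ * A + (M - A)) * Y = A * Y + Yᴴ * A - Yᴴ * A * Y :=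
    calc Yᴴ * (Mᴴ * (A⁻¹)ᴴ * A + (M - A)) * Y
        = (M * Y)ᴴ * (A⁻¹)ᴴ * A * Y + Yᴴ * (M * Y) - Yᴴ * A * Y := by
          rw [conjTranspose_mul]; noncomm_ring
      _ = A * Y + Yᴴ * A - Yᴴ * A * Y := by rw [hMY, hAinv, Matrix.one_mul]
  rw [conjTranspose_mul_hermitianPart_mul, conjTranspose_mul_hermitianPart_mul, hconj,
    ← hermitianPart_sub]
  congr 1
  simp only [conjTranspose_sub, conjTranspose_one]
  noncomm_ring

theorem posDef_hermitianPart_sub_conjTranspose_mul_mul {A M N : Matrix n n 𝕜}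
    (hA : IsUnit A) (hM : IsUnit M) (hsplit : A = M - N)
    (hpd : (hermitianPart (Mᴴ * (A⁻¹)ᴴ * A + N)).PosDef) :
    (hermitianPart A - (M⁻¹ * N)ᴴ * hermitianPart A * (M⁻¹ * N)).PosDef := by
  have hMdet := (isUnit_iff_isUnit_det M).mp hM
  have hN : N = M - A := by rw [hsplit]; abel
  have hT : M⁻¹ * N = 1 - M⁻¹ * A := by rw [hN, Matrix.mul_sub, nonsing_inv_mul _ hMdet]
  rw [hT, hermitianPart_sub_conjTranspose_mul_mul hA (mul_nonsing_inv_cancel_left _ _ hMdet),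
    ← hN]
  exact hpd.conjTranspose_mul_mul_same
    (mulVec_injective_iff_isUnit.mpr ((isUnit_nonsing_inv_iff.mpr hM).mul hA))

theorem exists_mulVec_eq_smul_of_mem_spectrum {T : Matrix n n 𝕜} {μ : 𝕜}
    (hμ : μ ∈ spectrum 𝕜 T) : ∃ v ≠ 0, T *ᵥ v = μ • v := by
  rw [← spectrum_toLin', ← Module.End.hasEigenvalue_iff_mem_spectrum] at hμ
  obtain ⟨v, hv⟩ := hμ.exists_hasEigenvector
  exact ⟨v, hv.2, hv.apply_eq_smul⟩

theorem norm_lt_one_of_mem_spectrum_sum_smul {ι : Type*} [Fintype ι] {H : Matrix n n 𝕜}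
    (hH : H.PosDef) {T : ι → Matrix n n 𝕜} (hT : ∀ k, (H - (T k)ᴴ * H * T k).PosDef)
    {β : ι → ℝ} (hβ : ∀ k, 0 ≤ β k) (hsum : ∑ k, β k = 1) {μ : 𝕜}
    (hμ : μ ∈ spectrum 𝕜 (∑ k, (β k : 𝕜) • T k)) : ‖μ‖ < 1 := by
  let p := hH.posSemidef.seminorm
  obtain ⟨v, hv0, hv⟩ := exists_mulVec_eq_smul_of_mem_spectrum hμ
  have hv_pos : 0 < p v := by
    have hsq := hH.re_dotProduct_pos hv0
    rw [← hH.posSemidef.seminorm_sq] at hsq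
    exact lt_of_pow_lt_pow_left₀ 2 (apply_nonneg p v) (by rwa [zero_pow two_ne_zero])
  have hcontract : ∀ k, p (T k *ᵥ v) < p v := fun k => by
    have hsq := re_star_dotProduct_mulVec_lt (hT k) hv0
    rw [← hH.posSemidef.seminorm_sq, ← hH.posSemidef.seminorm_sq] at hsq
    exact lt_of_pow_lt_pow_left₀ 2 (apply_nonneg p v) hsq
  have h := p.sum_smul_lt_of_lt hβ hsum hcontract
  simp only [← smul_mulVec, ← sum_mulVec, hv, map_smul_eq_mul] at h
  exact (mul_lt_iff_lt_one_left hv_pos).mp h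

end Matrix

theorem stmt5 {n m : ℕ} (A : Matrix (Fin n) (Fin n) ℂ)
    (hA : ((1 / 2 : ℂ) • (A + Aᴴ)).PosDef)
    (M N : Fin m → Matrix (Fin n) (Fin n) ℂ) (β : Fin m → ℝ)
    (hM : ∀ k, IsUnit (M k)) (hsplit : ∀ k, A = M k - N k)
    (hpd : ∀ k, ((1 / 2 : ℂ) • (((M k)ᴴ * (A⁻¹)ᴴ * A + N k) +
      ((M k)ᴴ * (A⁻¹)ᴴ * A + N k)ᴴ)).PosDef)
    (hβ : ∀ k, 0 ≤ β k) (hsum : ∑ k, β k = 1) :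
    spectralRadius ℂ (∑ k, (β k : ℂ) • ((M k)⁻¹ * N k)) < 1 := by
  have hAunit : IsUnit A := isUnit_of_posDef_hermitianPart hA
  have hcontract : ∀ k, (hermitianPart A -
      ((M k)⁻¹ * N k)ᴴ * hermitianPart A * ((M k)⁻¹ * N k)).PosDef := fun k =>
    posDef_hermitianPart_sub_conjTranspose_mul_mul hAunit (hM k) (hsplit k) (hpd k)
  refine spectralRadius_lt_of_forall_lt_of_finite (finite_spectrum _) one_pos fun μ hμ => ?_
  exact_mod_cast norm_lt_one_of_mem_spectrum_sum_smul hA hcontract hβ hsum hμ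
end

section
/- Let A ∈ ℂ^{n×n} be non-Hermitian positive definite (Hermitian part H = (A+A*)/2 ≻ 0) and let A = M - N be a splitting with N Hermitian such that M* + N is positive definite (its Hermitian part is Hermitian positive definite). Then ρ(M^{-1}N) < 1. -/
/-! If `N v = λ M v` with `v ≠ 0`, put `m = v* M v`. As `N` is Hermitian, `λ m = v* N v` is real,
and positivity of the Hermitian parts of `A = M - N` and of `M* + N` gives `Re m - λ m > 0` and
`Re m + λ m > 0`. Hence `|λ| |m| = |λ m| < Re m ≤ |m|`, so `|λ| < 1`. The same two inequalities at a
null vector of `M` read `-Re (v* N v) > 0` and `Re (v* N v) > 0`, so `M` is nonsingular. -/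

open Matrix
open scoped ComplexOrder

namespace RCLike

theorem norm_lt_one_of_abs_re_mul_lt_re {𝕜 : Type*} [RCLike 𝕜] {k m : 𝕜}
    (hkm : im (k * m) = 0) (h : |re (k * m)| < re m) : ‖k‖ < 1 := by
  have hnorm : ‖k * m‖ = |re (k * m)| := by
    rw [← norm_ofReal (K := 𝕜), conj_eq_iff_re.1 (conj_eq_iff_im.2 hkm)]
  have hm : |re (k * m)| < ‖m‖ := h.trans_le (re_le_norm m)
  have hlt : ‖k‖ * ‖m‖ < ‖m‖ := by rwa [← norm_mul, hnorm]
  exact (mul_lt_iff_lt_one_left ((abs_nonneg _).trans_lt hm)).1 hlt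

end RCLike

theorem spectralRadius_lt_of_finite {𝕜 A : Type*} [NormedField 𝕜] [Ring A] [Algebra 𝕜 A]
    {a : A} {r : ENNReal} (hfin : (spectrum 𝕜 a).Finite) (hr : 0 < r)
    (h : ∀ k ∈ spectrum 𝕜 a, (‖k‖₊ : ENNReal) < r) : spectralRadius 𝕜 a < r := by
  rw [spectralRadius, ← hfin.coe_toFinset]
  simp_rw [Finset.mem_coe, ← Finset.sup_eq_iSup]
  exact (Finset.sup_lt_iff hr).2 fun k hk ↦ h k (hfin.mem_toFinset.1 hk)

namespace Matrix

open RCLike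

variable {ι 𝕜 : Type*} [Fintype ι]

theorem exists_mulVec_eq_smul_of_mem_spectrum_s10 [DecidableEq ι] [Field 𝕜] {B : Matrix ι ι 𝕜} {k : 𝕜}
    (hk : k ∈ spectrum 𝕜 B) : ∃ v ≠ 0, B *ᵥ v = k • v := by
  rw [← spectrum_toLin', ← Module.End.hasEigenvalue_iff_mem_spectrum] at hk
  obtain ⟨v, hv⟩ := hk.exists_hasEigenvector
  exact ⟨v, hv.2, by simpa using hv.apply_eq_smul⟩

variable [RCLike 𝕜]

theorem star_dotProduct_conjTranspose_mulVec (B : Matrix ι ι 𝕜) (v : ι → 𝕜) :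
    star v ⬝ᵥ (Bᴴ *ᵥ v) = star (star v ⬝ᵥ (B *ᵥ v)) := by
  rw [star_dotProduct, star_mulVec, conjTranspose_conjTranspose, ← dotProduct_mulVec]

theorem re_star_dotProduct_mulVec_pos {B : Matrix ι ι 𝕜}
    (hB : ((1 / 2 : 𝕜) • (B + Bᴴ)).PosDef) {v : ι → 𝕜} (hv : v ≠ 0) :
    0 < re (star v ⬝ᵥ (B *ᵥ v)) := by
  have hpos := hB.re_dotProduct_pos hv
  rwa [smul_mulVec, add_mulVec, dotProduct_smul, dotProduct_add,
    star_dotProduct_conjTranspose_mulVec, smul_eq_mul, star_def, add_conj, ← mul_assoc,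
    one_div, inv_mul_cancel₀ two_ne_zero, one_mul, ofReal_re] at hpos

theorem isUnit_of_posDef_hermitianPart_sub [DecidableEq ι] {M N : Matrix ι ι 𝕜}
    (hA : ((1 / 2 : 𝕜) • ((M - N) + (M - N)ᴴ)).PosDef)
    (hP : ((1 / 2 : 𝕜) • ((Mᴴ + N) + (Mᴴ + N)ᴴ)).PosDef) : IsUnit M := by
  rw [isUnit_iff_isUnit_det, isUnit_iff_ne_zero]
  intro hdet
  obtain ⟨v, hv, hMv⟩ := exists_mulVec_eq_zero_iff.2 hdet
  have hA' := re_star_dotProduct_mulVec_pos hA hv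
  have hP' := re_star_dotProduct_mulVec_pos hP hv
  rw [sub_mulVec, hMv, dotProduct_sub, dotProduct_zero, zero_sub, map_neg] at hA'
  rw [add_mulVec, dotProduct_add, star_dotProduct_conjTranspose_mulVec, hMv, dotProduct_zero,
    star_zero, zero_add] at hP'
  linarith

theorem norm_lt_one_of_mulVec_eq_smul_mulVec {M N : Matrix ι ι 𝕜}
    (hA : ((1 / 2 : 𝕜) • ((M - N) + (M - N)ᴴ)).PosDef) (hN : N.IsHermitian)
    (hP : ((1 / 2 : 𝕜) • ((Mᴴ + N) + (Mᴴ + N)ᴴ)).PosDef)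
    {k : 𝕜} {v : ι → 𝕜} (hv : v ≠ 0) (hk : N *ᵥ v = k • (M *ᵥ v)) : ‖k‖ < 1 := by
  set m := star v ⬝ᵥ (M *ᵥ v)
  have hNv : star v ⬝ᵥ (N *ᵥ v) = k * m := by rw [hk, dotProduct_smul, smul_eq_mul]
  have hreal : im (k * m) = 0 := by
    rw [← conj_eq_iff_im, ← star_def, ← hNv, ← star_dotProduct_conjTranspose_mulVec, hN.eq]
  have hA' := re_star_dotProduct_mulVec_pos hA hv
  have hP' := re_star_dotProduct_mulVec_pos hP hv
  rw [sub_mulVec, dotProduct_sub, hNv, map_sub] at hA'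
  rw [add_mulVec, dotProduct_add, star_dotProduct_conjTranspose_mulVec, hNv, map_add, star_def,
    conj_re] at hP'
  exact norm_lt_one_of_abs_re_mul_lt_re hreal (abs_lt.2 ⟨by linarith, by linarith⟩)

end Matrix

theorem stmt10_general {n : ℕ} (A M N : Matrix (Fin n) (Fin n) ℂ)
    (hA : ((1 / 2 : ℂ) • (A + Aᴴ)).PosDef)
    (hMN : A = M - N) (hN : N.IsHermitian)
    (hP : ((1 / 2 : ℂ) • ((Mᴴ + N) + (Mᴴ + N)ᴴ)).PosDef) :
    spectralRadius ℂ (M⁻¹ * N) < 1 := by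
  subst hMN
  have hM := (isUnit_iff_isUnit_det M).1 (isUnit_of_posDef_hermitianPart_sub hA hP)
  refine spectralRadius_lt_of_finite (finite_spectrum _) one_pos fun k hk ↦ ?_
  obtain ⟨v, hv, hkv⟩ := exists_mulVec_eq_smul_of_mem_spectrum_s10 hk
  have hNv : N *ᵥ v = k • (M *ᵥ v) := by
    rw [← mulVec_smul, ← hkv, mulVec_mulVec, mul_nonsing_inv_cancel_left _ _ hM]
  exact_mod_cast norm_lt_one_of_mulVec_eq_smul_mulVec hA hN hP hv hNv

theorem stmt10 {n : ℕ} (A M N : Matrix (Fin n) (Fin n) ℂ)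
    (hA : ((1 / 2 : ℂ) • (A + Aᴴ)).PosDef)
    (hM : IsUnit M) (hMN : A = M - N) (hN : N.IsHermitian)
    (hP : ((1 / 2 : ℂ) • ((Mᴴ + N) + (Mᴴ + N)ᴴ)).PosDef) :
    spectralRadius ℂ (M⁻¹ * N) < 1 :=
  stmt10_general A M N hA hMN hN hP
end

section
/- Let A ∈ ℂ^{n×n} be non-Hermitian positive definite and A = M - N a splitting with N Hermitian positive semidefinite. Then ρ(M^{-1}N) < 1. -/
/-!
If `M⁻¹ N x = μ x` with `x ≠ 0`, then `N x = μ (A + N) x`, so `s = μ (a + s)` with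
`s = x* N x ≥ 0` and `a = x* A x`, where `Re a > 0`. Since `Re (a + s) > s`, we get
`|a + s| > s = |μ| |a + s|`, hence `|μ| < 1`. The spectrum is finite, so `ρ(M⁻¹ N) < 1`.
-/

open Matrix
open scoped ComplexOrder

open scoped NNReal ENNReal in
theorem spectralRadius_lt_of_finite_of_forall_lt {𝕜 A : Type*} [NormedField 𝕜] [Ring A]
    [Algebra 𝕜 A] {a : A} (hfin : (spectrum 𝕜 a).Finite) {r : ℝ≥0∞} (hr : 0 < r)
    (h : ∀ k ∈ spectrum 𝕜 a, (‖k‖₊ : ℝ≥0∞) < r) : spectralRadius 𝕜 a < r := by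
  simp_rw [spectralRadius, ← hfin.mem_toFinset, ← Finset.sup_eq_iSup, Finset.sup_lt_iff hr,
    hfin.mem_toFinset]
  exact h

theorem Matrix.exists_mulVec_eq_smul_of_mem_spectrum_s11 {ι K : Type*} [Fintype ι] [DecidableEq ι]
    [Field K] {B : Matrix ι ι K} {μ : K} (hμ : μ ∈ spectrum K B) :
    ∃ x ≠ 0, B *ᵥ x = μ • x := by
  rw [← spectrum_toLin', ← Module.End.hasEigenvalue_iff_mem_spectrum] at hμ
  obtain ⟨x, hx⟩ := hμ.exists_hasEigenvector
  exact ⟨x, hx.2, by simpa using hx.apply_eq_smul⟩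

theorem Complex.norm_lt_one_of_ofReal_eq_mul_add {μ a : ℂ} {s : ℝ} (hs : 0 ≤ s)
    (ha : 0 < a.re) (h : (s : ℂ) = μ * (a + s)) : ‖μ‖ < 1 := by
  have hlt : s < ‖a + s‖ :=
    calc s < (a + s).re := by simp; linarith
      _ ≤ ‖a + s‖ := re_le_norm _
  have hnorm : ‖μ‖ * ‖a + s‖ = s := by
    rw [← norm_mul, ← h, norm_real, Real.norm_of_nonneg hs]
  nlinarith [norm_nonneg μ]

theorem Matrix.re_dotProduct_mulVec_pos_of_posDef_hermitianPart {ι : Type*} [Fintype ι]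
    {A : Matrix ι ι ℂ} (hA : ((1 / 2 : ℂ) • (A + Aᴴ)).PosDef) {x : ι → ℂ} (hx : x ≠ 0) :
    0 < (star x ⬝ᵥ A *ᵥ x).re := by
  have h := (posDef_iff_dotProduct_mulVec.mp hA).2 hx
  have hstar : star x ⬝ᵥ Aᴴ *ᵥ x = star (star x ⬝ᵥ A *ᵥ x) := by
    rw [← star_dotProduct_star, star_mulVec, star_star, dotProduct_mulVec]
  rw [smul_mulVec, add_mulVec, dotProduct_smul, dotProduct_add, hstar, smul_eq_mul,
    Complex.star_def, Complex.add_conj] at h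
  have half_two : ∀ r : ℝ, (1 / 2 : ℂ) * ((2 * r : ℝ) : ℂ) = r := fun r => by push_cast; ring
  exact_mod_cast half_two _ ▸ h

theorem Matrix.PosSemidef.exists_dotProduct_mulVec_eq_ofReal {ι : Type*} [Fintype ι]
    {N : Matrix ι ι ℂ} (hN : N.PosSemidef) (x : ι → ℂ) :
    ∃ s : ℝ, 0 ≤ s ∧ (s : ℂ) = star x ⬝ᵥ N *ᵥ x := by
  simpa using RCLike.nonneg_iff_exists_ofReal.mp ((posSemidef_iff_dotProduct_mulVec.mp hN).2 x)

theorem Matrix.norm_lt_one_of_mem_spectrum_inv_mul {ι : Type*} [Fintype ι] [DecidableEq ι]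
    {A M N : Matrix ι ι ℂ} (hA : ((1 / 2 : ℂ) • (A + Aᴴ)).PosDef) (hM : IsUnit M)
    (hMN : A = M - N) (hN : N.PosSemidef) {μ : ℂ} (hμ : μ ∈ spectrum ℂ (M⁻¹ * N)) : ‖μ‖ < 1 := by
  obtain ⟨x, hx0, hx⟩ := exists_mulVec_eq_smul_of_mem_spectrum_s11 hμ
  have hNx : N *ᵥ x = μ • (M *ᵥ x) := by
    rw [← mulVec_smul, ← hx, mulVec_mulVec, ← Matrix.mul_assoc,
      mul_nonsing_inv _ ((isUnit_iff_isUnit_det M).mp hM), Matrix.one_mul]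
  have hquad : star x ⬝ᵥ N *ᵥ x = μ * (star x ⬝ᵥ A *ᵥ x + star x ⬝ᵥ N *ᵥ x) := by
    rw [← dotProduct_add, ← add_mulVec, hMN, sub_add_cancel, ← smul_eq_mul, ← dotProduct_smul,
      hNx]
  obtain ⟨s, hs, hsx⟩ := hN.exists_dotProduct_mulVec_eq_ofReal x
  exact Complex.norm_lt_one_of_ofReal_eq_mul_add hs
    (re_dotProduct_mulVec_pos_of_posDef_hermitianPart hA hx0) (hsx ▸ hquad)

theorem stmt11 {n : ℕ} (A M N : Matrix (Fin n) (Fin n) ℂ)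
    (hA : ((1 / 2 : ℂ) • (A + Aᴴ)).PosDef)
    (hM : IsUnit M) (hMN : A = M - N) (hN : N.PosSemidef) :
    spectralRadius ℂ (M⁻¹ * N) < 1 :=
  spectralRadius_lt_of_finite_of_forall_lt (Matrix.finite_spectrum _) one_pos fun _ hμ => by
    exact_mod_cast norm_lt_one_of_mem_spectrum_inv_mul hA hM hMN hN hμ
end
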